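/- Let X, Y : [0,1] → ℝ^d be continuously differentiable paths and let X ⊙ Y : [0,1]² → ℝ^d be the membrane (s,t) ↦ (X_1(s)Y_1(t), ..., X_d(s)Y_d(t)) given by componentwise multiplication. Then the signature matrix of X ⊙ Y is the Hadamard (entrywise) product of the path signature matrices: S(X ⊙ Y)_{ij} = S(X)_{ij} · S(Y)_{ij} for all i, j. -/

import Mathlib

/-!
Since `∂₁₂ (f(s) g(t)) = f'(s) g'(t)`, the membrane integrand over `Δ × Δ` is a product of a
function of the first simplex variable and a function of the second, so Fubini splits the
membrane integral into the product of the two path integrals.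
-/

open MeasureTheory

noncomputable section

/-- The ordered simplex `0 ≤ t 0 ≤ t 1 ≤ ⋯ ≤ t (k-1) ≤ 1` in `Fin k → ℝ`. -/
def orderedSimplex (k : ℕ) : Set (Fin k → ℝ) :=
  {t | Monotone t ∧ ∀ a, t a ∈ Set.Icc (0 : ℝ) 1}

/-- Iterated-integral (path) signature entry for a family of scalar coordinate
functions `f a : ℝ → ℝ`, i.e. `⟨σ(X), e_{i₁}* ⊗ ⋯ ⊗ e_{i_k}*⟩` with `f a = X_{i_a}`. -/
def pathSig {k : ℕ} (f : Fin k → ℝ → ℝ) : ℝ :=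
  ∫ t in orderedSimplex k, ∏ a, deriv (f a) (t a)

/-- Mixed second partial derivative `∂²/∂s∂t`. -/
def d12 (f : ℝ → ℝ → ℝ) (s t : ℝ) : ℝ :=
  deriv (fun t' => deriv (fun s' => f s' t') s) t

/-- id-signature entry for a family of scalar membrane coordinate functions. -/
def memSig {k : ℕ} (f : Fin k → ℝ → ℝ → ℝ) : ℝ :=
  ∫ p in (orderedSimplex k) ×ˢ (orderedSimplex k), ∏ a, d12 (f a) (p.1 a) (p.2 a)

theorem d12_mul (f g : ℝ → ℝ) (s t : ℝ) :
    d12 (fun s t => f s * g t) s t = deriv f s * deriv g t := by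
  simp only [d12, deriv_mul_const_field, deriv_const_mul_field]

theorem memSig_mul {k : ℕ} (f g : Fin k → ℝ → ℝ) :
    memSig (fun a s t => f a s * g a t) = pathSig f * pathSig g := by
  simp only [memSig, pathSig, d12_mul, Finset.prod_mul_distrib]
  rw [Measure.volume_eq_prod]
  exact setIntegral_prod_mul (fun x : Fin k → ℝ => ∏ a, deriv (f a) (x a))
    (fun y : Fin k → ℝ => ∏ a, deriv (g a) (y a)) _ _

theorem hadamard_membrane_signature_matrix_general (d : ℕ)
    (X Y : ℝ → Fin d → ℝ)
    (i j : Fin d) :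
    memSig (fun a s t => X s (![i, j] a) * Y t (![i, j] a))
      = pathSig (fun a t => X t (![i, j] a)) * pathSig (fun a t => Y t (![i, j] a)) :=
  memSig_mul _ _

/-- the signature matrix of the Hadamard-product membrane
`X ⊙ Y : (s,t) ↦ (X₁(s)Y₁(t), …, X_d(s)Y_d(t))` is the entrywise product of the
path signature matrices. -/
theorem hadamard_membrane_signature_matrix (d : ℕ)
    (X Y : ℝ → Fin d → ℝ) (hX : ContDiff ℝ 1 X) (hY : ContDiff ℝ 1 Y)
    (i j : Fin d) :
    memSig (fun a s t => X s (![i, j] a) * Y t (![i, j] a))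
      = pathSig (fun a t => X t (![i, j] a)) * pathSig (fun a t => Y t (![i, j] a)) :=
  hadamard_membrane_signature_matrix_general d X Y i j
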